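/- Let u be a partial column and A a partial matrix over a field F with the same finite row index m, and suppose zero(u, A) = 1, i.e., every completion [ū | Ā] of [u | A] with rank([ū | Ā]) = mr([u | A]) has ū = 0. Let λ ∈ F with λ ≠ 0, and let M' be the partial matrix obtained from [u | A] by appending one extra row whose entry in the u-column is known and equal to λ and whose remaining entries are all unknown. Then mr(M') = mr(A) + 1. -/
import Mathlib

/-- `N` is a completion of the partial matrix `(M, Ω)`: it agrees with `M`
on all known positions `Ω`. -/
def IsCompletion {F m n : Type*} [Field F] (M : Matrix m n F) (Ω : Set (m × n))
    (N : Matrix m n F) : Prop :=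
  ∀ p ∈ Ω, N p.1 p.2 = M p.1 p.2

/-- The minimum rank of the partial matrix `(M, Ω)`: the minimum of the ranks of
its completions. -/
noncomputable def mr {F m n : Type*} [Field F] [Fintype m] [Fintype n]
    (M : Matrix m n F) (Ω : Set (m × n)) : ℕ :=
  sInf {r | ∃ N : Matrix m n F, IsCompletion M Ω N ∧ N.rank = r}

/-- The partial matrix `[u | A]`: the partial column `u` (with known row set `Ωu`)
adjoined as an extra (first) column to `A`. -/
def augMat {F m n : Type*} [Field F] (u : m → F) (A : Matrix m n F) :
    Matrix m (Unit ⊕ n) F :=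
  Matrix.of fun i => Sum.elim (fun _ => u i) (A i)

/-- Known positions of the partial matrix `[u | A]`, inherited from `Ωu` and `ΩA`. -/
def augSet {m n : Type*} (Ωu : Set m) (ΩA : Set (m × n)) : Set (m × (Unit ⊕ n)) :=
  {p | Sum.elim (fun _ => p.1 ∈ Ωu) (fun j => (p.1, j) ∈ ΩA) p.2}

/-- `zero (u, A) = 1`, as a proposition: every completion of `[u | A]` attaining the
minimum rank has zero `u`-column. -/
def zeroProp {F m n : Type*} [Field F] [Fintype m] [Fintype n]
    (u : m → F) (Ωu : Set m) (A : Matrix m n F) (ΩA : Set (m × n)) : Prop :=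
  ∀ N : Matrix m (Unit ⊕ n) F, IsCompletion (augMat u A) (augSet Ωu ΩA) N →
    N.rank = mr (augMat u A) (augSet Ωu ΩA) → ∀ i, N i (Sum.inl ()) = 0
/-- The partial matrix `M'` obtained from `[u | A]` by appending one extra row whose
entry in the `u`-column is `lam` and whose remaining entries are unknown. -/
def rowAugMat {F m n : Type*} [Field F] (u : m → F) (A : Matrix m n F) (lam : F) :
    Matrix (m ⊕ Unit) (Unit ⊕ n) F :=
  Matrix.of fun p q =>
    match p, q with
    | Sum.inl i, Sum.inl _ => u i
    | Sum.inl i, Sum.inr j => A i j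
    | Sum.inr _, Sum.inl _ => lam
    | Sum.inr _, Sum.inr _ => 0

/-- Known positions of `rowAugMat`: those of `[u | A]` together with the `lam` entry;
all other entries of the new row are unknown. -/
def rowAugSet {m n : Type*} (Ωu : Set m) (ΩA : Set (m × n)) :
    Set ((m ⊕ Unit) × (Unit ⊕ n)) :=
  {p | match p with
    | (Sum.inl i, Sum.inl _) => i ∈ Ωu
    | (Sum.inl i, Sum.inr j) => (i, j) ∈ ΩA
    | (Sum.inr _, Sum.inl _) => True
    | (Sum.inr _, Sum.inr _) => False}

open Matrix Module

section Aux

variable {F m n : Type*} [Field F] [Fintype m] [Fintype n]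

/-- Restricting the rows of a matrix can only decrease the rank. -/
lemma rank_submatrix_row_le' {l : Type*} (f : l → m) (A : Matrix m n F) :
    (A.submatrix f id).rank ≤ A.rank := by
  rw [Matrix.rank, Matrix.rank]
  have h : (A.submatrix f id).mulVecLin = (LinearMap.funLeft F F f).comp A.mulVecLin := by
    ext v i
    simp [Matrix.mulVecLin_apply, Matrix.mulVec, dotProduct, LinearMap.funLeft]
  rw [h, LinearMap.range_comp]
  exact Submodule.finrank_map_le _ _

/-- Restricting the columns of a matrix can only decrease the rank. -/
lemma rank_submatrix_col_le' {o : Type*} [Fintype o] (g : o → n) (A : Matrix m n F) :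
    (A.submatrix id g).rank ≤ A.rank := by
  rw [← Matrix.rank_transpose (A.submatrix id g), ← Matrix.rank_transpose A,
    Matrix.transpose_submatrix]
  exact rank_submatrix_row_le' g Aᵀ

/-- A product of submodules is linearly equivalent to the product of the submodules. -/
def Submodule.prodEquiv' {R M N : Type*} [Ring R] [AddCommGroup M] [AddCommGroup N]
    [Module R M] [Module R N] (p : Submodule R M) (q : Submodule R N) :
    (p.prod q) ≃ₗ[R] p × q where
  toFun x := (⟨x.1.1, x.2.1⟩, ⟨x.1.2, x.2.2⟩)
  invFun y := ⟨(y.1.1, y.2.1), ⟨y.1.2, y.2.2⟩⟩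
  map_add' _ _ := rfl
  map_smul' _ _ := rfl
  left_inv _ := rfl
  right_inv _ := rfl

lemma finrank_prod_submodule {R M N : Type*} [Field R] [AddCommGroup M] [AddCommGroup N]
    [Module R M] [Module R N] [FiniteDimensional R M] [FiniteDimensional R N]
    (p : Submodule R M) (q : Submodule R N) :
    finrank R (p.prod q) = finrank R p + finrank R q := by
  rw [LinearEquiv.finrank_eq (Submodule.prodEquiv' p q), Module.finrank_prod]

/-- Key rank computation: if the first column of `N` is zero except for a nonzero
entry `lam` in the last row, then the rank of `N` is one more than the rank of the
top-right block. -/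
lemma rank_aug (N : Matrix (m ⊕ Unit) (Unit ⊕ n) F) (lam : F) (hlam : lam ≠ 0)
    (h0 : ∀ i, N (Sum.inl i) (Sum.inl ()) = 0)
    (hl : N (Sum.inr ()) (Sum.inl ()) = lam) :
    N.rank = (N.submatrix Sum.inl Sum.inr).rank + 1 := by
  classical
  set B := N.submatrix Sum.inl Sum.inr with hB
  set e := LinearEquiv.sumArrowLequivProdArrow m Unit F F with he
  have key : Submodule.map (e : (m ⊕ Unit → F) →ₗ[F] (m → F) × (Unit → F))
      (LinearMap.range N.mulVecLin) = (LinearMap.range B.mulVecLin).prod ⊤ := by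
    apply le_antisymm
    · rintro y hy
      rw [Submodule.mem_map] at hy
      obtain ⟨z, hz, rfl⟩ := hy
      obtain ⟨x, rfl⟩ := hz
      rw [Submodule.mem_prod]
      refine ⟨⟨x ∘ Sum.inr, ?_⟩, trivial⟩
      ext i
      show B.mulVec (x ∘ Sum.inr) i = N.mulVec x (Sum.inl i)
      simp only [Matrix.mulVec, dotProduct, Fintype.sum_sum_type,
        Finset.univ_unique, Finset.sum_singleton]
      simp [hB, h0 i]
    · rintro ⟨y1, y2⟩ hy
      rw [Submodule.mem_prod] at hy
      obtain ⟨⟨w, hw⟩, -⟩ := hy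
      have hw' : B *ᵥ w = y1 := hw
      rw [Submodule.mem_map]
      refine ⟨N.mulVec (Sum.elim (fun _ => (y2 () - ∑ j, N (Sum.inr ()) (Sum.inr j) * w j) / lam) w),
        ⟨_, rfl⟩, ?_⟩
      have hfst : ∀ i, N.mulVec (Sum.elim
          (fun _ => (y2 () - ∑ j, N (Sum.inr ()) (Sum.inr j) * w j) / lam) w) (Sum.inl i)
          = y1 i := by
        intro i
        rw [← hw']
        show _ = B.mulVec w i
        simp only [Matrix.mulVec, dotProduct, Fintype.sum_sum_type,
          Finset.univ_unique, Finset.sum_singleton]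
        simp [hB, h0 i]
      have hsnd : ∀ s : Unit, N.mulVec (Sum.elim
          (fun _ => (y2 () - ∑ j, N (Sum.inr ()) (Sum.inr j) * w j) / lam) w) (Sum.inr s)
          = y2 s := by
        rintro ⟨⟩
        simp only [Matrix.mulVec, dotProduct, Fintype.sum_sum_type,
          Finset.univ_unique, Finset.sum_singleton]
        simp only [Sum.elim_inl, Sum.elim_inr, hl]
        rw [mul_div_cancel₀ _ hlam]
        ring
      apply Prod.ext
      · ext i
        exact hfst i
      · ext s
        exact hsnd s
  have h1 : N.rank = finrank F ((LinearMap.range B.mulVecLin).prod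
      (⊤ : Submodule F (Unit → F))) := by
    rw [← key, LinearEquiv.finrank_map_eq]
    rfl
  rw [h1, finrank_prod_submodule, finrank_top, Module.finrank_pi]
  simp [Matrix.rank]

lemma mr_le_of_completion (M : Matrix m n F) (Ω : Set (m × n)) (N : Matrix m n F)
    (h : IsCompletion M Ω N) : mr M Ω ≤ N.rank :=
  Nat.sInf_le ⟨N, h, rfl⟩

lemma exists_min_completion (M : Matrix m n F) (Ω : Set (m × n)) :
    ∃ N, IsCompletion M Ω N ∧ N.rank = mr M Ω := by
  have hne : {r | ∃ N : Matrix m n F, IsCompletion M Ω N ∧ N.rank = r}.Nonempty :=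
    ⟨M.rank, M, fun _ _ => rfl, rfl⟩
  exact Nat.sInf_mem hne

end Aux

/-- If `zero (u, A) = 1` and `lam ≠ 0`, then appending to `[u | A]` a row with known
entry `lam` in the `u`-column and all other entries unknown gives a partial matrix of
minimum rank `mr A + 1`. -/
theorem mr_rowAug_of_zeroProp {F m n : Type*} [Field F] [Fintype m] [Fintype n]
    (u : m → F) (Ωu : Set m) (A : Matrix m n F) (ΩA : Set (m × n))
    (hzero : zeroProp u Ωu A ΩA) (lam : F) (hlam : lam ≠ 0) :
    mr (rowAugMat u A lam) (rowAugSet Ωu ΩA) = mr A ΩA + 1 := by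
  classical
  -- u vanishes on its known set
  obtain ⟨N₀, hN₀c, hN₀r⟩ := exists_min_completion (augMat u A) (augSet Ωu ΩA)
  have hcol := hzero N₀ hN₀c hN₀r
  have h0 : ∀ i ∈ Ωu, u i = 0 := fun i hi =>
    (hN₀c (i, Sum.inl ()) hi).symm.trans (hcol i)
  -- mr A ≤ mr [u|A]
  have hAmr : mr A ΩA ≤ mr (augMat u A) (augSet Ωu ΩA) := by
    have hc : IsCompletion A ΩA (N₀.submatrix id Sum.inr) := fun p hp =>
      hN₀c (p.1, Sum.inr p.2) hp
    calc mr A ΩA ≤ (N₀.submatrix id Sum.inr).rank := mr_le_of_completion _ _ _ hc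
      _ ≤ N₀.rank := rank_submatrix_col_le' Sum.inr N₀
      _ = _ := hN₀r
  apply le_antisymm
  · -- upper bound
    obtain ⟨Ab, hAbc, hAbr⟩ := exists_min_completion A ΩA
    set N' : Matrix (m ⊕ Unit) (Unit ⊕ n) F := Matrix.of fun p q =>
      match p, q with
      | Sum.inl _, Sum.inl _ => 0
      | Sum.inl i, Sum.inr j => Ab i j
      | Sum.inr _, Sum.inl _ => lam
      | Sum.inr _, Sum.inr _ => 0 with hN'
    have hc : IsCompletion (rowAugMat u A lam) (rowAugSet Ωu ΩA) N' := by
      rintro ⟨p, q⟩ hp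
      match p, q with
      | Sum.inl i, Sum.inl _ => exact (h0 i hp).symm
      | Sum.inl i, Sum.inr j => exact hAbc (i, j) hp
      | Sum.inr _, Sum.inl _ => rfl
      | Sum.inr _, Sum.inr _ => exact absurd hp (by simp [rowAugSet])
    have hr : N'.rank = mr A ΩA + 1 := by
      have h := rank_aug N' lam hlam (fun i => rfl) rfl
      have hsub : N'.submatrix Sum.inl Sum.inr = Ab := by
        ext i j; rfl
      rw [h, hsub, hAbr]
    calc mr (rowAugMat u A lam) (rowAugSet Ωu ΩA) ≤ N'.rank :=
          mr_le_of_completion _ _ _ hc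
      _ = mr A ΩA + 1 := hr
  · -- lower bound
    obtain ⟨N', hc', hr'⟩ := exists_min_completion (rowAugMat u A lam) (rowAugSet Ωu ΩA)
    rw [← hr']
    set N : Matrix m (Unit ⊕ n) F := N'.submatrix Sum.inl id with hNdef
    have hNc : IsCompletion (augMat u A) (augSet Ωu ΩA) N := by
      rintro ⟨i, q⟩ hq
      match q with
      | Sum.inl _ => exact hc' (Sum.inl i, Sum.inl ()) hq
      | Sum.inr j => exact hc' (Sum.inl i, Sum.inr j) hq
    have hmrN : mr (augMat u A) (augSet Ωu ΩA) ≤ N.rank := mr_le_of_completion _ _ _ hNc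
    have hAsub : IsCompletion A ΩA (N'.submatrix Sum.inl Sum.inr) := fun p hp =>
      hc' (Sum.inl p.1, Sum.inr p.2) hp
    have hmrA : mr A ΩA ≤ (N'.submatrix Sum.inl Sum.inr).rank :=
      mr_le_of_completion _ _ _ hAsub
    by_cases hcase : N.rank = mr (augMat u A) (augSet Ωu ΩA)
    · have hz := hzero N hNc hcase
      have hl : N' (Sum.inr ()) (Sum.inl ()) = lam :=
        hc' (Sum.inr (), Sum.inl ()) trivial
      have h := rank_aug N' lam hlam (fun i => hz i) hl
      omega
    · have h1 : mr (augMat u A) (augSet Ωu ΩA) + 1 ≤ N.rank :=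
        Nat.succ_le_of_lt (lt_of_le_of_ne hmrN (Ne.symm hcase))
      have h2 : N.rank ≤ N'.rank := rank_submatrix_row_le' Sum.inl N'
      omega
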